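/- For every k ∈ {1,…,6}, every integer n ≥ 1, and every z ∈ ℂ with |z| ≤ 1, the map φ_{k,n} is holomorphic at z and its complex derivative satisfies |φ_{k,n}′(z)| ≤ 3 × 1.28 / n² = 3.84/n². -/

import Mathlib

open Complex

/-- The Möbius map `f(z) = ((√3 − 1)z + 1)/(−z + √3 + 1)`. -/
noncomputable def apollonianF (z : ℂ) : ℂ :=
  ((Real.sqrt 3 - 1) * z + 1) / (-z + Real.sqrt 3 + 1)

/-- The rotation `R_θ(z) = e^{iθ} z`. -/
noncomputable def rot (θ : ℝ) (z : ℂ) : ℂ := Complex.exp (θ * I) * z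

/-- The angle `θ_k = (−1)^k · 2π/3`. -/
noncomputable def apollonianTheta (k : ℕ) : ℝ := (-1) ^ k * (2 * Real.pi / 3)

/-- The angle `θ'_k = 2πk/3`. -/
noncomputable def apollonianTheta' (k : ℕ) : ℝ := 2 * Real.pi * k / 3

/-- The Apollonian generator `φ_{k,n} = R_{θ'_k} ∘ f^n ∘ R_{θ_k} ∘ f`. -/
noncomputable def apollonianPhi (k n : ℕ) (z : ℂ) : ℂ :=
  rot (apollonianTheta' k) (apollonianF^[n] (rot (apollonianTheta k) (apollonianF z)))

/-!
The map `f` is parabolic with fixed point `1`: `1 / (1 - f w) = 1 / (1 - w) + 1 / √3`. Hence, on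
the half-plane `Re w ≤ 1`, `f^[n] w = ((√3 - n) w + n) / iterDenom n w` and
`(f^[n])' w = 3 / iterDenom n w ^ 2`, where `iterDenom n w = n (1 - w) + √3` has modulus at least
`√3` and at least `n |1 - w|`. As rotations are isometries, `|φ_{k,n}' z| ≤ 3 / (n |1 - w|) ^ 2`
with `w = R_{θ_k} (f z)`.

It remains to keep `w` away from `1`. The map `f` sends the unit disk into the disk with centre
`c = 4 - 2√3` and radius `r = 2√3 - 3`. As `cos θ_k = -1/2`, the rotated centre `R_{θ_k} c` is at
distance `√(1 + c + c²) = √(33 - 18√3)` from `1`, so `|1 - w| ≥ √(33 - 18√3) - r > 0.884`, and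
`3 / 0.884² < 3.84`.
-/

lemma sqrt_three_lt : √3 < 1.7321 := by
  rw [Real.sqrt_lt' (by norm_num)]; norm_num

lemma sqrt_three_gt : 1.732 < √3 := by
  rw [Real.lt_sqrt (by norm_num)]; norm_num

lemma ofReal_sqrt_three_ne_zero : (√3 : ℂ) ≠ 0 :=
  ofReal_ne_zero.2 (Real.sqrt_ne_zero'.2 (by norm_num))

lemma sq_ofReal_sqrt_three : (√3 : ℂ) ^ 2 = 3 := by
  rw [← ofReal_pow, Real.sq_sqrt (by norm_num)]; norm_num

lemma hasDerivAt_linear_div_linear (a b c d z : ℂ) (h : c * z + d ≠ 0) :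
    HasDerivAt (fun x => (a * x + b) / (c * x + d)) ((a * d - b * c) / (c * z + d) ^ 2) z := by
  have hnum : HasDerivAt (fun x => a * x + b) a z := by
    simpa using ((hasDerivAt_id z).const_mul a).add_const b
  have hden : HasDerivAt (fun x => c * x + d) c z := by
    simpa using ((hasDerivAt_id z).const_mul c).add_const d
  exact (hnum.div hden h).congr_deriv (by ring)

lemma norm_le_norm_add_ofReal {ζ : ℂ} (hζ : 0 ≤ ζ.re) {a : ℝ} (ha : 0 ≤ a) :
    ‖ζ‖ ≤ ‖ζ + a‖ := by
  rw [← sq_le_sq₀ (norm_nonneg _) (norm_nonneg _), ← normSq_eq_norm_sq, ← normSq_eq_norm_sq,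
    normSq_add, normSq_ofReal]
  simp only [conj_ofReal, mul_re, ofReal_re, ofReal_im]
  nlinarith [mul_nonneg hζ ha]

lemma norm_mul_sub_one_le_norm_sub {a : ℝ} (ha : 1 ≤ |a|) {z : ℂ} (hz : ‖z‖ ≤ 1) :
    ‖a * z - 1‖ ≤ ‖a - z‖ := by
  have hz2 : normSq z ≤ 1 := by
    rw [normSq_eq_norm_sq]; exact pow_le_one₀ (norm_nonneg z) hz
  have ha2 : 1 ≤ a ^ 2 := by nlinarith [sq_abs a, abs_nonneg a]
  rw [← sq_le_sq₀ (norm_nonneg _) (norm_nonneg _), ← normSq_eq_norm_sq, ← normSq_eq_norm_sq]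
  rw [normSq_apply] at hz2
  simp only [normSq_apply, sub_re, sub_im, mul_re, mul_im, ofReal_re, ofReal_im, one_re, one_im]
  nlinarith [mul_nonneg (sub_nonneg.2 ha2) (sub_nonneg.2 hz2)]

lemma hasDerivAt_rot (θ : ℝ) (z : ℂ) : HasDerivAt (rot θ) (exp (θ * I)) z := by
  unfold rot
  simpa only [mul_one] using (hasDerivAt_id' z).const_mul (exp (θ * I))

lemma norm_rot (θ : ℝ) (z : ℂ) : ‖rot θ z‖ = ‖z‖ := by
  rw [rot, norm_mul, norm_exp_ofReal_mul_I, one_mul]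

lemma rot_sub (θ : ℝ) (z w : ℂ) : rot θ z - rot θ w = rot θ (z - w) := (mul_sub _ _ _).symm

lemma norm_one_sub_rot_ofReal_sq (θ c : ℝ) :
    ‖1 - rot θ c‖ ^ 2 = 1 - 2 * c * Real.cos θ + c ^ 2 := by
  rw [← normSq_eq_norm_sq, normSq_apply]
  simp only [rot, sub_re, sub_im, one_re, one_im, mul_re, mul_im, exp_ofReal_mul_I_re,
    exp_ofReal_mul_I_im, ofReal_re, ofReal_im]
  nlinarith [Real.sin_sq_add_cos_sq θ]

lemma cos_apollonianTheta (k : ℕ) : Real.cos (apollonianTheta k) = -(1 / 2) := by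
  have h : Real.cos (2 * Real.pi / 3) = -(1 / 2) := by
    rw [show 2 * Real.pi / 3 = Real.pi - Real.pi / 3 by ring, Real.cos_pi_sub,
      Real.cos_pi_div_three]
  rcases neg_one_pow_eq_or ℝ k with hk | hk <;> simp [apollonianTheta, hk, h]

noncomputable def iterDenom (n : ℕ) (w : ℂ) : ℂ := n * (1 - w) + √3

lemma iterDenom_re (n : ℕ) (w : ℂ) : (iterDenom n w).re = n * (1 - w.re) + √3 := by
  simp [iterDenom]

lemma sqrt_three_le_norm_iterDenom (n : ℕ) {w : ℂ} (hw : w.re ≤ 1) :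
    √3 ≤ ‖iterDenom n w‖ :=
  calc √3 ≤ (iterDenom n w).re := by
        rw [iterDenom_re]; nlinarith [(n.cast_nonneg : (0 : ℝ) ≤ n)]
    _ ≤ ‖iterDenom n w‖ := re_le_norm _

lemma iterDenom_ne_zero (n : ℕ) {w : ℂ} (hw : w.re ≤ 1) : iterDenom n w ≠ 0 :=
  norm_pos_iff.1 <| (Real.sqrt_pos.2 (by norm_num)).trans_le (sqrt_three_le_norm_iterDenom n hw)

lemma norm_le_norm_iterDenom (n : ℕ) {w : ℂ} (hw : w.re ≤ 1) :
    n * ‖1 - w‖ ≤ ‖iterDenom n w‖ := by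
  have hre : 0 ≤ ((n : ℂ) * (1 - w)).re := by
    simpa using mul_nonneg n.cast_nonneg (sub_nonneg.2 hw)
  simpa [iterDenom] using norm_le_norm_add_ofReal hre (Real.sqrt_nonneg 3)

lemma apollonianF_eq (z : ℂ) : apollonianF z = ((√3 - 1) * z + 1) / iterDenom 1 z := by
  rw [apollonianF, iterDenom]; push_cast; ring_nf

lemma hasDerivAt_apollonianF {z : ℂ} (hz : iterDenom 1 z ≠ 0) :
    HasDerivAt apollonianF (3 / iterDenom 1 z ^ 2) z := by
  have hden : -1 * z + (√3 + 1) = iterDenom 1 z := by simp only [iterDenom]; push_cast; ring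
  have h := hasDerivAt_linear_div_linear (√3 - 1) 1 (-1) (√3 + 1) z (hden ▸ hz)
  rw [hden, show (√3 - 1) * (√3 + 1) - 1 * -1 = (3 : ℂ) by
    linear_combination sq_ofReal_sqrt_three] at h
  convert h using 1
  funext x; rw [apollonianF]; ring_nf

lemma iterDenom_one_iterate_formula (n : ℕ) {w : ℂ} (hw : w.re ≤ 1) :
    iterDenom 1 (((√3 - n) * w + n) / iterDenom n w) =
      √3 * iterDenom (n + 1) w / iterDenom n w := by
  have hB := iterDenom_ne_zero n hw
  simp only [iterDenom] at hB ⊢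
  push_cast
  field_simp
  ring

lemma iterate_apollonianF_eq (n : ℕ) {w : ℂ} (hw : w.re ≤ 1) :
    apollonianF^[n] w = ((√3 - n) * w + n) / iterDenom n w := by
  induction n with
  | zero => simp [iterDenom]
  | succ n ih =>
    have hB := iterDenom_ne_zero n hw
    have hB' := iterDenom_ne_zero (n + 1) hw
    rw [Function.iterate_succ_apply', ih, apollonianF_eq, iterDenom_one_iterate_formula n hw]
    field_simp
    simp only [iterDenom]; push_cast
    ring

lemma hasDerivAt_iterate_apollonianF (n : ℕ) {w : ℂ} (hw : w.re ≤ 1) :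
    HasDerivAt apollonianF^[n] (3 / iterDenom n w ^ 2) w := by
  induction n with
  | zero => simpa [iterDenom, sq_ofReal_sqrt_three] using hasDerivAt_id w
  | succ n ih =>
    have hden :
        iterDenom 1 (apollonianF^[n] w) = √3 * iterDenom (n + 1) w / iterDenom n w := by
      rw [iterate_apollonianF_eq n hw, iterDenom_one_iterate_formula n hw]
    have hB := iterDenom_ne_zero n hw
    have hB' := iterDenom_ne_zero (n + 1) hw
    rw [Function.iterate_succ']
    refine ((hasDerivAt_apollonianF ?_).comp w ih).congr_deriv ?_
    · rw [hden]; exact div_ne_zero (mul_ne_zero ofReal_sqrt_three_ne_zero hB') hB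
    rw [hden]
    field_simp
    linear_combination (-1 : ℂ) * sq_ofReal_sqrt_three

lemma norm_apollonianF_sub_le {z : ℂ} (hz : ‖z‖ ≤ 1) :
    ‖apollonianF z - (4 - 2 * √3 : ℝ)‖ ≤ 2 * √3 - 3 := by
  have hden : (1 + √3 : ℂ) - z ≠ 0 := by
    convert iterDenom_ne_zero 1 ((re_le_norm z).trans hz) using 1
    simp only [iterDenom, Nat.cast_one]; ring
  have hs := sqrt_three_gt
  have key : apollonianF z - (4 - 2 * √3 : ℝ) =
      (2 * √3 - 3 : ℝ) * (((1 + √3 : ℝ) * z - 1) / ((1 + √3 : ℝ) - z)) := by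
    rw [apollonianF, show -z + √3 + 1 = (1 + √3 : ℂ) - z by ring]
    push_cast
    field_simp
    linear_combination (2 - 2 * z) * sq_ofReal_sqrt_three
  rw [key, norm_mul, norm_div, norm_real, Real.norm_of_nonneg (by linarith)]
  refine mul_le_of_le_one_right (by linarith) (div_le_one_of_le₀ ?_ (norm_nonneg _))
  exact norm_mul_sub_one_le_norm_sub (by rw [abs_of_pos (by linarith)]; linarith) hz

lemma norm_apollonianF_le_one {z : ℂ} (hz : ‖z‖ ≤ 1) : ‖apollonianF z‖ ≤ 1 := by
  have hc : ‖((4 - 2 * √3 : ℝ) : ℂ)‖ = 4 - 2 * √3 := by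
    rw [norm_real, Real.norm_of_nonneg (by linarith [sqrt_three_lt])]
  calc ‖apollonianF z‖ ≤ ‖apollonianF z - (4 - 2 * √3 : ℝ)‖ + ‖((4 - 2 * √3 : ℝ) : ℂ)‖ :=
        norm_le_norm_sub_add _ _
    _ ≤ 1 := by rw [hc]; linarith [norm_apollonianF_sub_le hz]

lemma le_norm_one_sub_rot_apollonianF {z : ℂ} (hz : ‖z‖ ≤ 1) {θ : ℝ}
    (hθ : Real.cos θ = -(1 / 2)) : 0.884 ≤ ‖1 - rot θ (apollonianF z)‖ := by
  set c : ℝ := 4 - 2 * √3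
  have h3 := Real.sq_sqrt (show (0 : ℝ) ≤ 3 by norm_num)
  have hd : ‖1 - rot θ c‖ ^ 2 = 33 - 18 * √3 := by
    rw [norm_one_sub_rot_ofReal_sq, hθ]; nlinarith
  have hd' : 2 * √3 - 3 + 0.884 ≤ ‖1 - rot θ c‖ := by
    nlinarith [sqrt_three_gt, sqrt_three_lt, norm_nonneg (1 - rot θ c)]
  have hr : ‖rot θ (apollonianF z) - rot θ c‖ ≤ 2 * √3 - 3 := by
    rw [rot_sub, norm_rot]; exact norm_apollonianF_sub_le hz
  linarith [norm_sub_le_norm_sub_add_norm_sub (1 : ℂ) (rot θ (apollonianF z)) (rot θ c)]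

theorem apollonianPhi_deriv_bound_general (k n : ℕ) (hn : 1 ≤ n)
    (z : ℂ) (hz : ‖z‖ ≤ 1) :
    DifferentiableAt ℂ (apollonianPhi k n) z ∧
      ‖deriv (apollonianPhi k n) z‖ ≤ 3.84 / (n : ℝ) ^ 2 := by
  set w := rot (apollonianTheta k) (apollonianF z)
  have hz1 : z.re ≤ 1 := (re_le_norm z).trans hz
  have hw1 : w.re ≤ 1 :=
    (re_le_norm w).trans ((norm_rot _ _).trans_le (norm_apollonianF_le_one hz))
  have hφ : HasDerivAt (apollonianPhi k n) (exp (apollonianTheta' k * I) *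
      (3 / iterDenom n w ^ 2 * (exp (apollonianTheta k * I) * (3 / iterDenom 1 z ^ 2)))) z :=
    (hasDerivAt_rot _ _).comp z <| (hasDerivAt_iterate_apollonianF n hw1).comp z <|
      (hasDerivAt_rot _ _).comp z (hasDerivAt_apollonianF (iterDenom_ne_zero 1 hz1))
  refine ⟨hφ.differentiableAt, ?_⟩
  have hw : 0.884 * n ≤ ‖iterDenom n w‖ := by
    nlinarith [norm_le_norm_iterDenom n hw1, (n.cast_nonneg : (0 : ℝ) ≤ n),
      le_norm_one_sub_rot_apollonianF hz (cos_apollonianTheta k)]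
  have hz' : 3 ≤ ‖iterDenom 1 z‖ ^ 2 := by
    nlinarith [sqrt_three_le_norm_iterDenom 1 hz1, Real.sqrt_nonneg 3,
      Real.sq_sqrt (show (0 : ℝ) ≤ 3 by norm_num)]
  have hn' : (1 : ℝ) ≤ n := by exact_mod_cast hn
  rw [hφ.deriv, norm_mul, norm_mul, norm_mul, norm_exp_ofReal_mul_I, norm_exp_ofReal_mul_I,
    norm_div, norm_div, norm_pow, norm_pow, one_mul, one_mul, RCLike.norm_ofNat]
  calc 3 / ‖iterDenom n w‖ ^ 2 * (3 / ‖iterDenom 1 z‖ ^ 2) ≤ 3 / (0.884 * n) ^ 2 * 1 := by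
        gcongr
        rw [div_le_one (by linarith)]; exact hz'
    _ ≤ 3.84 / (n : ℝ) ^ 2 := by
        rw [mul_one, mul_pow, ← div_div]
        gcongr; norm_num

/-- For `k ∈ {1,…,6}`, `n ≥ 1` and `|z| ≤ 1`, the map `φ_{k,n}` is holomorphic at `z` and
`|φ_{k,n}′(z)| ≤ 3 × 1.28/n² = 3.84/n²`. -/
theorem apollonianPhi_deriv_bound (k n : ℕ) (hk1 : 1 ≤ k) (hk6 : k ≤ 6) (hn : 1 ≤ n)
    (z : ℂ) (hz : ‖z‖ ≤ 1) :
    DifferentiableAt ℂ (apollonianPhi k n) z ∧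
      ‖deriv (apollonianPhi k n) z‖ ≤ 3.84 / (n : ℝ) ^ 2 :=
  apollonianPhi_deriv_bound_general k n hn z hz
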